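/- arXiv:1411.4861 — 2 statements merged into one kernel-verified Lean document; each statement's English description precedes it below -/
import Mathlib

section
/- For i ∈ {2, 4} one has ({e^i} ∘ G₁) ∘ {e^i} ⊆ E₃: every word labeling a direct summand of ω(1^i) ⊗ ω(g) ⊗ ω(1^i) with g ∈ G₁ begins with e and contains a letter different from e. (Lemma 3.4(2) of the paper.) -/
/- Combinatorial model of the Lemeux–Tarrago fusion rules for a free wreath
product 𝔾 ≀* S_N⁺. Words over `I` (a type modeling `Irr 𝔾`) label the
irreducible corepresentations. -/

variable {I : Type*}

/-- The conjugate word `x̄ = (x.map bar).reverse`. -/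
def conjW (bar : I → I) (x : List I) : List I := (x.map bar).reverse

/-- `fusW bar fus x y` is the set of words `z` such that `ω(z)` is a direct
summand of `ω(x) ⊗ ω(y)`: there are `u, t, v` with `x = u ++ t`,
`y = t̄ ++ v` and either `z = u ++ v` (concatenation), or `u ≠ []`, `v ≠ []`
and `z = u.dropLast ++ [γ] ++ v.tail` for some `γ ∈ fus u.getLast v.head`
(fusion). -/
def fusW (bar : I → I) (fus : I → I → Set I) (x y : List I) : Set (List I) :=
  {z | ∃ u t v : List I, x = u ++ t ∧ y = conjW bar t ++ v ∧
    (z = u ++ v ∨ ∃ a b : I, u.getLast? = some a ∧ v.head? = some b ∧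
      ∃ γ ∈ fus a b, z = u.dropLast ++ [γ] ++ v.tail)}

/-- `A ∘ B` for sets of words. -/
def fusSet (bar : I → I) (fus : I → I → Set I) (A B : Set (List I)) :
    Set (List I) :=
  {z | ∃ x ∈ A, ∃ y ∈ B, z ∈ fusW bar fus x y}

/-- `E₁`: words starting with `e`, together with the empty word. -/
def E₁ (e : I) : Set (List I) := {x | x = [] ∨ x.head? = some e}

/-- `E₂`: words all of whose letters equal `e`. -/
def E₂ (e : I) : Set (List I) := {x | ∃ k : ℕ, x = List.replicate k e}

/-- `E₃ = E₁ \ E₂`. -/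
def E₃ (e : I) : Set (List I) := E₁ e \ E₂ e

/-- `S`: words containing at least one letter different from `e`. -/
def Sset (e : I) : Set (List I) := {x | x ∉ E₂ e}

/-- `G₁`: nonempty words starting with a letter different from `e`. -/
def G₁ (e : I) : Set (List I) := {x | x ≠ [] ∧ x.head? ≠ some e}

/-- `G₂`: nonempty words starting and ending with letters different from `e`. -/
def G₂ (e : I) : Set (List I) :=
  {x | x ≠ [] ∧ x.head? ≠ some e ∧ x.getLast? ≠ some e}

/- The outer letters `e` act as units: fusing `e^i` with `g ∈ G₁` can only
concatenate, or absorb one `e` into the head of `g` (as `fus e β = {β}`), so it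
leaves `e^j g` with `j ≥ i - 1 ≥ 1`, a word of `E₃`. Fusing a word of `E₃` with
`e^i` on the right can only cancel trailing `e`'s (the conjugate of a word of
`e`'s is again a word of `e`'s), so the first non-trivial letter survives, and
the result again starts with `e`. -/

section

variable {bar : I → I} {e : I} {fus : I → I → Set I}

lemma mem_E₂_iff {x : List I} : x ∈ E₂ e ↔ ∀ a ∈ x, a = e :=
  ⟨fun ⟨_, hx⟩ _ ha => List.eq_of_mem_replicate (hx ▸ ha),
    fun h => ⟨x.length, List.eq_replicate_iff.2 ⟨rfl, h⟩⟩⟩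

lemma append_mem_E₂_iff {u v : List I} : u ++ v ∈ E₂ e ↔ u ∈ E₂ e ∧ v ∈ E₂ e := by
  simp only [mem_E₂_iff, List.forall_mem_append]

lemma G₁_subset_Sset : G₁ e ⊆ Sset e := by
  rintro (_ | ⟨a, x⟩) ⟨hne, ha⟩ hx
  · exact hne rfl
  · exact ha (congrArg some (mem_E₂_iff.1 hx a List.mem_cons_self))

lemma conjW_mem_E₂ (hbare : bar e = e) {x : List I} (hx : x ∈ E₂ e) : conjW bar x ∈ E₂ e := by
  obtain ⟨k, rfl⟩ := hx
  exact ⟨k, by simp [conjW, hbare]⟩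

lemma conjW_conjW (hbar : ∀ a, bar (bar a) = a) (x : List I) : conjW bar (conjW bar x) = x := by
  simp [conjW, List.map_reverse, Function.comp_def, hbar]

lemma replicate_append_mem_E₃ {j : ℕ} (hj : 0 < j) {y : List I} (hy : y ∈ Sset e) :
    List.replicate j e ++ y ∈ E₃ e := by
  obtain ⟨k, rfl⟩ := Nat.exists_eq_add_of_lt hj
  exact ⟨Or.inr rfl, fun h => hy (append_mem_E₂_iff.1 h).2⟩

lemma append_mem_E₃ {u : List I} (hu : u ∈ E₃ e) (w : List I) : u ++ w ∈ E₃ e := by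
  obtain ⟨hu₁ | hu₁, hu₂⟩ := hu
  · exact absurd ⟨0, hu₁⟩ hu₂
  · refine ⟨Or.inr ?_, fun h => hu₂ (append_mem_E₂_iff.1 h).1⟩
    cases u with
    | nil => exact absurd ⟨0, rfl⟩ hu₂
    | cons a u => exact hu₁

lemma mem_E₃_of_append_mem_E₃ {u v : List I} (h : u ++ v ∈ E₃ e) (hv : v ∈ E₂ e) :
    u ∈ E₃ e := by
  obtain ⟨h₁ | h₁, h₂⟩ := h
  · exact absurd ⟨0, h₁⟩ h₂
  · cases u with
    | nil => exact absurd (append_mem_E₂_iff.2 ⟨⟨0, rfl⟩, hv⟩) h₂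
    | cons a u => exact ⟨Or.inr h₁, fun hu => h₂ (append_mem_E₂_iff.2 ⟨hu, hv⟩)⟩

lemma exists_replicate_append_of_mem_fusW_replicate (hbare : bar e = e)
    (hfus_left : ∀ β, fus e β = {β}) {i : ℕ} {y z : List I} (hy : y.head? ≠ some e)
    (hz : z ∈ fusW bar fus (List.replicate i e) y) :
    ∃ j, i ≤ j + 1 ∧ z = List.replicate j e ++ y := by
  obtain ⟨u, t, v, hx, rfl, hz⟩ := hz
  obtain ⟨-, -, ht⟩ := List.append_eq_replicate_iff.1 hx.symm
  -- `t̄` is a word of `e`'s at the head of `y`, so it is empty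
  obtain rfl : t = [] := by
    obtain ⟨k, hk⟩ := conjW_mem_E₂ hbare ⟨_, ht⟩
    cases k with
    | zero => simpa [conjW] using hk
    | succ k => exact absurd (by rw [hk]; rfl) hy
  obtain rfl : u = List.replicate i e := by simpa using hx.symm
  rcases hz with rfl | ⟨a, b, ha, hb, γ, hγ, rfl⟩
  · exact ⟨i, by omega, by simp [conjW]⟩
  · have hi : i ≠ 0 := by rintro rfl; simp at ha
    obtain rfl : a = e := by simpa [List.getLast?_replicate, hi] using ha.symm
    obtain rfl : γ = b := by simpa [hfus_left] using hγ
    refine ⟨i - 1, by omega, ?_⟩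
    simp [conjW, List.dropLast_replicate, List.cons_head?_tail hb]

lemma fusW_replicate_subset_E₃ (hbar : ∀ a, bar (bar a) = a) (hbare : bar e = e)
    (hfus_right : ∀ β, fus β e = {β}) {i : ℕ} {x : List I} (hx : x ∈ E₃ e) :
    fusW bar fus x (List.replicate i e) ⊆ E₃ e := by
  rintro z ⟨u, t, v, rfl, hy, hz⟩
  obtain ⟨htv, hv⟩ := append_mem_E₂_iff.1 (⟨i, hy.symm⟩ : conjW bar t ++ v ∈ E₂ e)
  have hu : u ∈ E₃ e :=
    mem_E₃_of_append_mem_E₃ hx (conjW_conjW hbar t ▸ conjW_mem_E₂ hbare htv)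
  rcases hz with rfl | ⟨a, b, ha, hb, γ, hγ, rfl⟩
  · exact append_mem_E₃ hu v
  · obtain rfl : b = e := mem_E₂_iff.1 hv b (List.mem_of_mem_head? hb)
    obtain rfl : a = γ := by simpa [hfus_right, eq_comm] using hγ
    rw [List.dropLast_append_getLast? a ha]
    exact append_mem_E₃ hu v.tail

end

theorem stmt6 (bar : I → I) (e : I) (fus : I → I → Set I)
    (hbar : ∀ a : I, bar (bar a) = a) (hbare : bar e = e)
    (hfus_left : ∀ β : I, fus e β = {β}) (hfus_right : ∀ β : I, fus β e = {β}) :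
    ∀ i ∈ ({2, 4} : Set ℕ),
      fusSet bar fus (fusSet bar fus {List.replicate i e} (G₁ e))
        {List.replicate i e} ⊆ E₃ e := by
  intro i hi z ⟨x, ⟨_, rfl, g, hg, hx⟩, _, rfl, hz⟩
  have hi₂ : 2 ≤ i := by rcases hi with rfl | rfl <;> norm_num
  obtain ⟨j, hij, rfl⟩ :=
    exists_replicate_append_of_mem_fusW_replicate hbare hfus_left hg.2 hx
  exact fusW_replicate_subset_E₃ hbar hbare hfus_right
    (replicate_append_mem_E₃ (by omega) (G₁_subset_Sset hg)) hz
end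

section
/- For every α ∈ I, every integer j ≥ 1, every β ∈ I with β ≠ e, and every word w ∈ List I: fusW (α :: e^j) (β :: w) = {α :: (e^j ++ β :: w), α :: (e^{j−1} ++ β :: w)}. (Combinatorial form of the identities ω(x_t) ⊗ ω(β,…) = ω(α, 1^{2t−1}, β,…) ⊕ ω(α, 1^{2t−2}, β,…) from the proof of Lemma 2.5(3) of the paper.) -/
/- Combinatorial model of the Lemeux–Tarrago fusion rules for a free wreath
product 𝔾 ≀* S_N⁺. Words over `I` (a type modeling `Irr 𝔾`) label the
irreducible corepresentations. -/

variable {I : Type*}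

/- If the last letter `e` of `α e^j` could cancel against the first letter of `β w`, then
`β = bar e = e`; so no cancellation occurs, and the only summands are the concatenation and
the fusion of `e` with `β`, which gives back `β` alone. -/

theorem conjW_head? (bar : I → I) (t : List I) :
    (conjW bar t).head? = t.getLast?.map bar := by
  simp [conjW]

theorem head?_eq_map_getLast?_of_cancel {bar : I → I} {x y u t v : List I}
    (hx : x = u ++ t) (hy : y = conjW bar t ++ v) (ht : t ≠ []) :
    y.head? = x.getLast?.map bar := by
  have hconj : conjW bar t ≠ [] := by simpa [conjW] using ht
  rw [hy, hx, List.head?_append_of_ne_nil _ hconj, conjW_head?,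
    List.getLast?_append_of_ne_nil _ ht]

theorem fusW_eq_of_no_cancel {bar : I → I} {fus : I → I → Set I} {x y : List I}
    (h : ∀ a ∈ x.getLast?, y.head? ≠ some (bar a)) :
    fusW bar fus x y = insert (x ++ y) {z | ∃ a b : I, x.getLast? = some a ∧
      y.head? = some b ∧ ∃ γ ∈ fus a b, z = x.dropLast ++ [γ] ++ y.tail} := by
  ext z
  constructor
  · rintro ⟨u, t, v, hx, hy, hz⟩
    obtain rfl : t = [] := by
      by_contra ht
      have hcancel := head?_eq_map_getLast?_of_cancel hx hy ht
      obtain ⟨a, ha⟩ : ∃ a, x.getLast? = some a :=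
        Option.ne_none_iff_exists'.mp (by simp [hx, ht])
      exact h a ha (by rw [hcancel, ha]; rfl)
    simp only [List.append_nil, conjW, List.map_nil, List.reverse_nil,
      List.nil_append] at hx hy
    subst hx hy
    exact hz
  · exact fun hz => ⟨x, [], y, by simp, by simp [conjW], hz⟩

theorem stmt10_general (bar : I → I) (e : I) (fus : I → I → Set I)
    (hbare : bar e = e)
    (hfus_left : ∀ β : I, fus e β = {β}) :
    ∀ α : I, ∀ j : ℕ, 1 ≤ j → ∀ β : I, β ≠ e → ∀ w : List I,
      fusW bar fus (α :: List.replicate j e) (β :: w) =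
        {α :: (List.replicate j e ++ β :: w),
          α :: (List.replicate (j - 1) e ++ β :: w)} := by
  intro α j hj β hβ w
  obtain ⟨m, rfl⟩ := Nat.exists_eq_add_of_le' hj
  have hword : α :: List.replicate (m + 1) e = (α :: List.replicate m e) ++ [e] := by
    rw [List.replicate_succ', List.cons_append]
  have hlast : (α :: List.replicate (m + 1) e).getLast? = some e := by
    rw [hword, List.getLast?_concat]
  have hdrop : (α :: List.replicate (m + 1) e).dropLast = α :: List.replicate m e := by
    rw [hword, List.dropLast_concat]
  rw [fusW_eq_of_no_cancel (by simpa [hlast, hbare] using hβ)]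
  ext z
  simp [hlast, hdrop, hfus_left]

theorem stmt10 (bar : I → I) (e : I) (fus : I → I → Set I)
    (hbar : ∀ a : I, bar (bar a) = a) (hbare : bar e = e)
    (hfus_left : ∀ β : I, fus e β = {β}) (hfus_right : ∀ β : I, fus β e = {β}) :
    ∀ α : I, ∀ j : ℕ, 1 ≤ j → ∀ β : I, β ≠ e → ∀ w : List I,
      fusW bar fus (α :: List.replicate j e) (β :: w) =
        {α :: (List.replicate j e ++ β :: w),
          α :: (List.replicate (j - 1) e ++ β :: w)} :=
  stmt10_general bar e fus hbare hfus_left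
end
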